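/- Let K be a field, c ≥ 1 an integer, and let x_0,…,x_p, y_0,…,y_q be algebraically independent indeterminates, i.e. work over the polynomial ring S = K[x_0,…,x_p,y_0,…,y_q] (equivalently over its fraction field). Then the (2c+p+q) × (c+p+q) matrix A = [T_{c+p}(y) ; −T_{c+q}(x)] (vertical block concatenation), viewed over the fraction field of S, has rank c+p+q, i.e. full column rank. -/
import Mathlib


/-- The `m × (m+l)` band (Toeplitz) matrix associated to a tuple `z = (z_0, …, z_l)`:
its `(i,j)` entry is `z_{j-i}` if `0 ≤ j - i ≤ l` and `0` otherwise. -/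
def bandMatrix {R : Type*} [CommRing R] (m l : ℕ) (z : Fin (l + 1) → R) :
    Matrix (Fin m) (Fin (m + l)) R :=
  Matrix.of fun i j =>
    if h : (i : ℕ) ≤ (j : ℕ) ∧ (j : ℕ) - (i : ℕ) ≤ l then
      z ⟨(j : ℕ) - (i : ℕ), by omega⟩
    else 0

/-- The tuple of indeterminates `x = (x_0, …, x_p)` in `K[x_0,…,x_p,y_0,…,y_q]`. -/
noncomputable def xVar (K : Type*) [Field K] (p q : ℕ) :
    Fin (p + 1) → MvPolynomial (Fin (p + 1) ⊕ Fin (q + 1)) K :=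
  fun i => MvPolynomial.X (Sum.inl i)

/-- The tuple of indeterminates `y = (y_0, …, y_q)` in `K[x_0,…,x_p,y_0,…,y_q]`. -/
noncomputable def yVar (K : Type*) [Field K] (p q : ℕ) :
    Fin (q + 1) → MvPolynomial (Fin (p + 1) ⊕ Fin (q + 1)) K :=
  fun j => MvPolynomial.X (Sum.inr j)

/-- The `(2c+p+q) × (c+p+q)` vertical block matrix `A = [T_{c+p}(y) ; −T_{c+q}(x)]`
with indeterminate entries. -/
noncomputable def matrixA (K : Type*) [Field K] (c p q : ℕ) :
    Matrix (Fin (c + p) ⊕ Fin (c + q)) (Fin (c + p + q))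
      (MvPolynomial (Fin (p + 1) ⊕ Fin (q + 1)) K) :=
  Matrix.fromRows (bandMatrix (c + p) q (yVar K p q))
    (-(bandMatrix (c + q) p (xVar K p q)).submatrix id
        (Fin.cast (by omega : c + p + q = c + q + p)))

namespace BandAux

/-- Row selection picking a square submatrix. -/
def rowSel (c p q : ℕ) : Fin (c + p + q) → Fin (c + p) ⊕ Fin (c + q) :=
  fun j => if h : (j : ℕ) < c + q then Sum.inr ⟨j, h⟩
    else Sum.inl ⟨(j : ℕ) - q, by omega⟩

/-- Specialization point `x = e₀`, `y = e_q`. -/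
def pt (K : Type*) [Field K] (p q : ℕ) : (Fin (p + 1) ⊕ Fin (q + 1)) → K
  | Sum.inl i => if (i : ℕ) = 0 then 1 else 0
  | Sum.inr j => if (j : ℕ) = q then 1 else 0

lemma spec_eq (K : Type*) [Field K] (c p q : ℕ) :
    ((matrixA K c p q).submatrix (rowSel c p q) id).map (MvPolynomial.eval (pt K p q)) =
      Matrix.diagonal (fun j : Fin (c + p + q) => if (j : ℕ) < c + q then (-1 : K) else 1) := by
  ext i j
  simp only [Matrix.map_apply, Matrix.submatrix_apply, id_eq, rowSel]
  by_cases h : (i : ℕ) < c + q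
  · rw [dif_pos h]
    simp only [matrixA, Matrix.fromRows_apply_inr, Matrix.neg_apply, Matrix.submatrix_apply,
      id_eq, bandMatrix, Matrix.of_apply, Fin.coe_cast, Matrix.diagonal_apply, map_neg]
    by_cases hij : i = j
    · have hij' : (i : ℕ) = (j : ℕ) := congrArg Fin.val hij
      rw [if_pos hij, dif_pos (by omega : (i : ℕ) ≤ (j : ℕ) ∧ (j : ℕ) - (i : ℕ) ≤ p)]
      simp only [xVar, MvPolynomial.eval_X, pt]
      rw [if_pos (by omega : (j : ℕ) - (i : ℕ) = 0)]
      rw [if_pos h]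
    · have hij' : (i : ℕ) ≠ (j : ℕ) := fun hh => hij (Fin.ext hh)
      rw [if_neg hij]
      by_cases h1 : (i : ℕ) ≤ (j : ℕ) ∧ (j : ℕ) - (i : ℕ) ≤ p
      · rw [dif_pos h1]
        simp only [xVar, MvPolynomial.eval_X, pt]
        rw [if_neg (by omega : ¬ (j : ℕ) - (i : ℕ) = 0), neg_zero]
      · rw [dif_neg h1, map_zero, neg_zero]
  · rw [dif_neg h]
    simp only [matrixA, Matrix.fromRows_apply_inl, bandMatrix, Matrix.of_apply,
      Matrix.diagonal_apply]
    by_cases hij : i = j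
    · have hij' : (i : ℕ) = (j : ℕ) := congrArg Fin.val hij
      rw [if_pos hij,
        dif_pos (by omega : (i : ℕ) - q ≤ (j : ℕ) ∧ (j : ℕ) - ((i : ℕ) - q) ≤ q)]
      simp only [yVar, MvPolynomial.eval_X, pt]
      rw [if_pos (by omega : (j : ℕ) - ((i : ℕ) - q) = q)]
      rw [if_neg h]
    · have hij' : (i : ℕ) ≠ (j : ℕ) := fun hh => hij (Fin.ext hh)
      rw [if_neg hij]
      by_cases h1 : (i : ℕ) - q ≤ (j : ℕ) ∧ (j : ℕ) - ((i : ℕ) - q) ≤ q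
      · rw [dif_pos h1]
        simp only [yVar, MvPolynomial.eval_X, pt]
        rw [if_neg (by omega : ¬ (j : ℕ) - ((i : ℕ) - q) = q)]
      · rw [dif_neg h1, map_zero]

end BandAux

/-- over the polynomial ring `S = K[x_0,…,x_p,y_0,…,y_q]` in algebraically
independent indeterminates, the matrix `A = [T_{c+p}(y) ; −T_{c+q}(x)]`, viewed over the
fraction field of `S`, has full column rank `c+p+q`. -/
theorem bandMatrix_fromRows_generic_rank (K : Type*) [Field K] (c p q : ℕ) (hc : 1 ≤ c) :
    ((matrixA K c p q).map
      (algebraMap (MvPolynomial (Fin (p + 1) ⊕ Fin (q + 1)) K)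
        (FractionRing (MvPolynomial (Fin (p + 1) ⊕ Fin (q + 1)) K)))).rank
      = c + p + q := by
  classical
  set S := MvPolynomial (Fin (p + 1) ⊕ Fin (q + 1)) K
  set F := FractionRing S
  set M := (matrixA K c p q).map (algebraMap S F) with hM
  -- square submatrix over S and its determinant
  set B₀ := (matrixA K c p q).submatrix (BandAux.rowSel c p q) id with hB₀
  have hdet₀ : B₀.det ≠ 0 := by
    intro h0
    have h1 : (MvPolynomial.eval (BandAux.pt K p q)) B₀.det
        = (Matrix.diagonal (fun j : Fin (c + p + q) =>
            if (j : ℕ) < c + q then (-1 : K) else 1)).det := by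
      rw [RingHom.map_det, RingHom.mapMatrix_apply, BandAux.spec_eq]
    rw [h0, map_zero, Matrix.det_diagonal] at h1
    have h2 : (∏ j : Fin (c + p + q), if (j : ℕ) < c + q then (-1 : K) else 1) ≠ 0 := by
      apply Finset.prod_ne_zero_iff.mpr
      intro j _
      split_ifs <;> norm_num
    exact h2 h1.symm
  set B := M.submatrix (BandAux.rowSel c p q) id with hB
  have hBmap : B = B₀.map (algebraMap S F) := rfl
  have hdet : B.det ≠ 0 := by
    rw [hBmap, ← RingHom.mapMatrix_apply, ← RingHom.map_det]
    exact fun h => hdet₀ (IsFractionRing.injective S F (by rwa [map_zero]))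
  have hBunit : IsUnit B := (Matrix.isUnit_iff_isUnit_det B).mpr (isUnit_iff_ne_zero.mpr hdet)
  have hBinj : Function.Injective B.mulVec := Matrix.mulVec_injective_iff_isUnit.mpr hBunit
  have hinj : Function.Injective M.mulVecLin := by
    rw [← LinearMap.ker_eq_bot, LinearMap.ker_eq_bot']
    intro v hv
    have hv' : M.mulVec v = 0 := hv
    have : B.mulVec v = 0 := by
      funext j
      simp only [hB, Matrix.mulVec, dotProduct, Matrix.submatrix_apply, id_eq]
      have := congrFun hv' (BandAux.rowSel c p q j)
      simpa [Matrix.mulVec, dotProduct] using this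
    have := hBinj (by rw [this, Matrix.mulVec_zero] : B.mulVec v = B.mulVec 0)
    exact this
  rw [Matrix.rank, LinearMap.finrank_range_of_inj hinj, Module.finrank_fin_fun]
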